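/- Let H be a separable real Hilbert space, T a bounded positive self-adjoint operator on H, λ > 0, and r ∈ [1/2, 1]. Then in the Loewner order, λ^{2−2r}·T^{2r} ≤ (2 − 2r)·λ·T + (2r − 1)·T², i.e., the operator (2 − 2r)·λ·T + (2r − 1)·T² − λ^{2−2r}·T^{2r} is positive. -/

import Mathlib

open MeasureTheory
open scoped RealInnerProductSpace ENNReal

section OperatorPowers

variable {H : Type*} [NormedAddCommGroup H] [InnerProductSpace ℝ H] [CompleteSpace H]

/-- The Balakrishnan integral `(sin(rπ)/π) • ∫₀^∞ s^(r-1) • (T ∘ (T + s•I)⁻¹) ds`, which for a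
bounded positive self-adjoint operator `T` and `r ∈ (0,1)` is the fractional power `T ^ r`
given by the continuous functional calculus. -/
noncomputable def fracPow (T : H →L[ℝ] H) (r : ℝ) : H →L[ℝ] H :=
  (Real.sin (r * Real.pi) / Real.pi) •
    ∫ s in Set.Ioi (0 : ℝ), s ^ (r - 1) • (T * Ring.inverse (T + s • 1))

/-- `T ^ r` for `r ≥ 0`: the functional-calculus power of a bounded positive self-adjoint
operator, obtained from integer powers and the Balakrishnan fractional power. -/
noncomputable def nnPow (T : H →L[ℝ] H) (r : ℝ) : H →L[ℝ] H :=
  T ^ ⌊r⌋₊ * (if r - ⌊r⌋₊ = 0 then 1 else fracPow T (r - ⌊r⌋₊))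

/-- The real power `T ^ r` of a bounded positive self-adjoint operator `T` (with `T`
moreover invertible when `r < 0`), as given by the continuous functional calculus. -/
noncomputable def opRpow (T : H →L[ℝ] H) (r : ℝ) : H →L[ℝ] H :=
  if 0 ≤ r then nnPow T r else Ring.inverse (nnPow T (-r))

end OperatorPowers

/-!
For `1/2 < r < 1` put `α = 2r - 1 ∈ (0,1)`, so that `T^{2r} = T·T^α` and, by the Balakrishnan
formula, `T^{2r} = (sin απ / π) ∫₀^∞ s^{α-1} T²(T + s)⁻¹ ds`. For each `s > 0` the scalar bound
`x²/(x + s) ≤ (λ²x + s x²)/(λ + s)²`, whose defect is `s x (x - λ)²/((λ + s)²(x + s)) ≥ 0`,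
holds for `T` in the Loewner order since all operators involved commute. Integrating it against
`s^{α-1}` produces the Beta integrals `∫₀^∞ s^{a-1}(λ + s)^{-2} ds = λ^{a-2} Γ(a) Γ(2 - a)`, and
the reflection formula `Γ(α) Γ(1 - α) = π / sin απ` turns the bound into exactly
`(1 - α) λ T + α T²`. The endpoints `r = 1/2` and `r = 1` are equalities.
-/

open Set Real
open scoped Ring

section BetaIntegral

variable {a b t : ℝ}

theorem sin_mul_pi_div_pi_mul_Gamma_mul_Gamma_one_sub (h : sin (a * π) ≠ 0) :
    sin (a * π) / π * (Gamma a * Gamma (1 - a)) = 1 := by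
  rw [Gamma_mul_Gamma_one_sub, mul_comm π a]
  field_simp

theorem integral_Ioo_rpow_mul_one_sub_rpow (ha : 0 < a) (hb : 0 < b) :
    ∫ x in Ioo (0 : ℝ) 1, x ^ (a - 1) * (1 - x) ^ (b - 1) = Gamma a * Gamma b / Gamma (a + b) := by
  apply Complex.ofReal_injective
  push_cast [← Complex.Gamma_ofReal]
  rw [← Complex.betaIntegral_eq_Gamma_mul_div _ _ (by simpa) (by simpa), Complex.betaIntegral,
    intervalIntegral.integral_of_le zero_le_one, integral_Ioc_eq_integral_Ioo,
    ← integral_complex_ofReal]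
  refine setIntegral_congr_fun measurableSet_Ioo fun x ⟨hx0, hx1⟩ => ?_
  push_cast
  rw [Complex.ofReal_cpow hx0.le, Complex.ofReal_cpow (sub_pos.2 hx1).le]
  push_cast
  ring_nf

theorem integral_Ioi_rpow_div_one_add_rpow_eq_integral_Ioo (a b : ℝ) :
    ∫ u in Ioi (0 : ℝ), u ^ (a - 1) / (1 + u) ^ (a + b) =
      ∫ x in Ioo (0 : ℝ) 1, x ^ (a - 1) * (1 - x) ^ (b - 1) := by
  have himage : (fun x : ℝ => x / (1 - x)) '' Ioo 0 1 = Ioi 0 := by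
    ext u
    refine ⟨fun ⟨x, ⟨hx0, hx1⟩, hu⟩ => hu ▸ div_pos hx0 (sub_pos.2 hx1), fun hu => ?_⟩
    have hu : 0 < u := hu
    refine ⟨u / (1 + u), ⟨by positivity, (div_lt_one (by positivity)).2 (by linarith)⟩, ?_⟩
    field_simp
    ring
  have hderiv : ∀ x ∈ Ioo (0 : ℝ) 1,
      HasDerivWithinAt (fun x => x / (1 - x)) (1 / (1 - x) ^ 2) (Ioo 0 1) x := by
    intro x ⟨_, hx1⟩
    have h1x : 1 - x ≠ 0 := (sub_pos.2 hx1).ne'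
    refine (((hasDerivAt_id' x).div ((hasDerivAt_id' x).const_sub 1) h1x).congr_deriv ?_)
      |>.hasDerivWithinAt
    field_simp
    ring
  have hinj : InjOn (fun x : ℝ => x / (1 - x)) (Ioo 0 1) := by
    intro x ⟨_, hx1⟩ y ⟨_, hy1⟩ hxy
    have h1x : 1 - x ≠ 0 := (sub_pos.2 hx1).ne'
    have h1y : 1 - y ≠ 0 := (sub_pos.2 hy1).ne'
    field_simp at hxy
    linarith
  rw [← himage, integral_image_eq_integral_abs_deriv_smul measurableSet_Ioo hderiv hinj]
  refine setIntegral_congr_fun measurableSet_Ioo fun x ⟨hx0, hx1⟩ => ?_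
  have h1x : 0 < 1 - x := sub_pos.2 hx1
  have hsum : 1 + x / (1 - x) = (1 - x)⁻¹ := by field_simp; ring
  have hpow : (1 - x) ^ (a + b) = (1 - x) ^ (a - 1) * (1 - x) ^ (b - 1) * (1 - x) ^ 2 := by
    rw [← rpow_add h1x, ← rpow_natCast, ← rpow_add h1x]
    ring_nf
  rw [smul_eq_mul, abs_of_pos (by positivity), hsum, div_rpow hx0.le h1x.le, inv_rpow h1x.le,
    hpow]
  have : 0 < (1 - x) ^ (a - 1) := rpow_pos_of_pos h1x _
  field_simp

theorem integral_Ioi_rpow_div_add_rpow (ht : 0 < t) (ha : 0 < a) (hb : 0 < b) :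
    ∫ s in Ioi (0 : ℝ), s ^ (a - 1) / (t + s) ^ (a + b) =
      t ^ (-b) * (Gamma a * Gamma b / Gamma (a + b)) := by
  rw [← integral_Ioo_rpow_mul_one_sub_rpow ha hb,
    ← integral_Ioi_rpow_div_one_add_rpow_eq_integral_Ioo, ← integral_const_mul]
  have h := integral_comp_mul_left_Ioi (fun s => s ^ (a - 1) / (t + s) ^ (a + b)) 0 ht
  rw [mul_zero, smul_eq_mul] at h
  rw [← inv_mul_eq_iff_eq_mul₀ (inv_ne_zero ht.ne'), inv_inv] at h
  rw [← h, ← integral_const_mul]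
  refine setIntegral_congr_fun measurableSet_Ioi fun u (hu : 0 < u) => ?_
  have h1u : 0 < 1 + u := by linarith
  have hexp : t * t ^ (a - 1) = t ^ (-b) * t ^ (a + b) := by
    rw [← rpow_add ht, show -b + (a + b) = 1 + (a - 1) by ring, rpow_add ht, rpow_one]
  rw [show t + t * u = t * (1 + u) by ring, mul_rpow ht.le hu.le, mul_rpow ht.le h1u.le]
  have : 0 < t ^ (a + b) := rpow_pos_of_pos ht _
  have : 0 < (1 + u) ^ (a + b) := rpow_pos_of_pos h1u _
  field_simp
  linear_combination hexp

theorem integrableOn_Ioi_rpow_div_add_rpow (ht : 0 < t) (ha : 0 < a) (hb : 0 < b) :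
    IntegrableOn (fun s => s ^ (a - 1) / (t + s) ^ (a + b)) (Ioi 0) :=
  -- the Bochner integral of a non-integrable function is `0`
  Integrable.of_integral_ne_zero <| by
    rw [integral_Ioi_rpow_div_add_rpow ht ha hb]
    have := Gamma_pos_of_pos ha
    have := Gamma_pos_of_pos hb
    have := Gamma_pos_of_pos (add_pos ha hb)
    positivity

theorem integral_Ioi_rpow_div_add_sq {β : ℝ} (ht : 0 < t) (hβ : -1 < β) (hβ1 : β < 1) :
    ∫ s in Ioi (0 : ℝ), s ^ β / (t + s) ^ 2 = t ^ (β - 1) * (Gamma (β + 1) * Gamma (1 - β)) := by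
  have h := integral_Ioi_rpow_div_add_rpow ht (a := β + 1) (b := 1 - β) (by linarith)
    (by linarith)
  simp_rw [add_sub_cancel_right, show β + 1 + (1 - β) = (2 : ℕ) by push_cast; ring, rpow_natCast,
    neg_sub, Nat.cast_ofNat, Gamma_two, div_one] at h
  exact h

theorem integrableOn_Ioi_rpow_div_add_sq {β : ℝ} (ht : 0 < t) (hβ : -1 < β) (hβ1 : β < 1) :
    IntegrableOn (fun s => s ^ β / (t + s) ^ 2) (Ioi 0) := by
  have h := integrableOn_Ioi_rpow_div_add_rpow ht (a := β + 1) (b := 1 - β) (by linarith)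
    (by linarith)
  simp_rw [add_sub_cancel_right, show β + 1 + (1 - β) = (2 : ℕ) by push_cast; ring,
    rpow_natCast] at h
  exact h

end BetaIntegral

namespace ContinuousLinearMap.IsPositive

variable {H : Type*} [NormedAddCommGroup H] [InnerProductSpace ℝ H] {T : H →L[ℝ] H} {s : ℝ}

lemma le_inner_add_smul_one (hT : T.IsPositive) (s : ℝ) (x : H) :
    ‖x‖ ^ 2 * s ≤ ‖⟪(T + s • 1) x, x⟫‖ := by
  have h := hT.inner_nonneg_left x
  calc ‖x‖ ^ 2 * s ≤ ⟪T x, x⟫ + s * ‖x‖ ^ 2 := by nlinarith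
    _ = ⟪(T + s • 1) x, x⟫ := by
      simp [inner_add_left, real_inner_smul_left]
    _ ≤ ‖⟪(T + s • 1) x, x⟫‖ := le_norm_self _

variable [CompleteSpace H]

lemma isUnit_add_smul_one (hT : T.IsPositive) (hs : 0 < s) : IsUnit (T + s • 1) :=
  isUnit_of_forall_le_norm_inner_map _ (c := ⟨s, hs.le⟩) hs (hT.le_inner_add_smul_one s)

lemma norm_inverse_add_smul_one_le (hT : T.IsPositive) (hs : 0 < s) :
    ‖(T + s • 1)⁻¹ʳ‖ ≤ s⁻¹ := by
  have hanti := antilipschitz_of_forall_le_inner_map _ (c := ⟨s, hs.le⟩) hs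
    (hT.le_inner_add_smul_one s)
  refine opNorm_le_bound _ (by positivity) fun x => ?_
  have h := (T + s • 1).bound_of_antilipschitz hanti ((T + s • 1)⁻¹ʳ x)
  rw [← mul_apply_eq_comp, Ring.mul_inverse_cancel _ (hT.isUnit_add_smul_one hs),
    one_apply_eq_self] at h
  exact h

lemma commute_inverse_add_smul_one (hT : T.IsPositive) (hs : 0 < s) :
    Commute T (T + s • 1)⁻¹ʳ := by
  obtain ⟨u, hu⟩ := hT.isUnit_add_smul_one hs
  rw [← hu, Ring.inverse_unit]
  refine Commute.units_inv_right ?_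
  rw [hu]
  exact (Commute.refl T).add_right ((Commute.one_right T).smul_right s)

lemma isSelfAdjoint_inverse_add_smul_one (hT : T.IsPositive) (s : ℝ) :
    IsSelfAdjoint (T + s • 1)⁻¹ʳ := by
  rw [IsSelfAdjoint, ← Ring.inverse_star, star_add, hT.isSelfAdjoint.star_eq, star_smul, star_one,
    star_trivial s]

lemma mul_inverse_add_smul_one (hT : T.IsPositive) (hs : 0 < s) :
    T * (T + s • 1)⁻¹ʳ = 1 - s • (T + s • 1)⁻¹ʳ := by
  have h := Ring.mul_inverse_cancel _ (hT.isUnit_add_smul_one hs)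
  rw [add_mul, smul_mul_assoc, one_mul] at h
  exact eq_sub_of_add_eq h

lemma one_add_mul_norm_mul_inverse_le (hT : T.IsPositive) (hs : 0 < s) :
    (1 + s) * ‖T * (T + s • 1)⁻¹ʳ‖ ≤ 2 + ‖T‖ := by
  have hR := hT.norm_inverse_add_smul_one_le hs
  have hsR : s * ‖(T + s • 1)⁻¹ʳ‖ ≤ 1 := by
    calc s * ‖(T + s • 1)⁻¹ʳ‖ ≤ s * s⁻¹ := by gcongr
      _ = 1 := mul_inv_cancel₀ hs.ne'
  have h2 : ‖T * (T + s • 1)⁻¹ʳ‖ ≤ 2 := by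
    rw [hT.mul_inverse_add_smul_one hs]
    calc ‖1 - s • (T + s • 1)⁻¹ʳ‖ ≤ ‖(1 : H →L[ℝ] H)‖ + ‖s • (T + s • 1)⁻¹ʳ‖ := norm_sub_le _ _
      _ ≤ 1 + 1 := by
        rw [norm_smul, norm_of_nonneg hs.le]
        gcongr
        exact norm_id_le
      _ = 2 := by norm_num
  have hTR : s * ‖T * (T + s • 1)⁻¹ʳ‖ ≤ ‖T‖ := by
    calc s * ‖T * (T + s • 1)⁻¹ʳ‖ ≤ s * (‖T‖ * ‖(T + s • 1)⁻¹ʳ‖) := by gcongr; exact norm_mul_le _ _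
      _ = ‖T‖ * (s * ‖(T + s • 1)⁻¹ʳ‖) := by ring
      _ ≤ ‖T‖ * 1 := by gcongr
      _ = ‖T‖ := mul_one _
  linarith

lemma isPositive_mul_inverse_add_smul_one (hT : T.IsPositive) (hs : 0 < s) :
    (T * (T + s • 1)⁻¹ʳ).IsPositive := by
  have hP : ((T + s • 1) * T).IsPositive := by
    rw [add_mul, smul_mul_assoc, one_mul]
    refine IsPositive.add ?_ (hT.smul_of_nonneg hs.le)
    have h := isPositive_adjoint_comp_self T
    rwa [hT.isSelfAdjoint.adjoint_eq] at h
  convert hP.conj_adjoint (T + s • 1)⁻¹ʳ using 1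
  rw [(hT.isSelfAdjoint_inverse_add_smul_one s).adjoint_eq]
  change _ = (T + s • 1)⁻¹ʳ * ((T + s • 1) * T) * (T + s • 1)⁻¹ʳ
  rw [← mul_assoc, Ring.inverse_mul_cancel _ (hT.isUnit_add_smul_one hs), one_mul]

lemma continuousOn_inverse_add_smul_one (hT : T.IsPositive) :
    ContinuousOn (fun s : ℝ => (T + s • 1)⁻¹ʳ) (Ioi 0) := by
  intro s (hs : 0 < s)
  obtain ⟨u, hu⟩ := hT.isUnit_add_smul_one hs
  have hinv : ContinuousAt Ring.inverse (T + s • 1) := hu ▸ NormedRing.inverse_continuousAt u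
  exact (hinv.comp (f := fun s : ℝ => T + s • 1) (by fun_prop)).continuousWithinAt

lemma add_sq_smul_mul_self_mul_inverse_le (hT : T.IsPositive) (hs : 0 < s) (t : ℝ) :
    (t + s) ^ 2 • (T * T * (T + s • 1)⁻¹ʳ) ≤ t ^ 2 • T + s • (T * T) := by
  set A := T - t • (1 : H →L[ℝ] H)
  have hU := hT.isUnit_add_smul_one hs
  have hA : A.adjoint = A :=
    (hT.isSelfAdjoint.sub ((IsSelfAdjoint.all t).smul (IsSelfAdjoint.one _))).adjoint_eq
  have hAU : A * (T + s • 1) = (T + s • 1) * A := by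
    simp only [A, mul_add, add_mul, sub_mul, mul_sub, smul_mul_assoc, mul_smul_comm, mul_one,
      one_mul]
    module
  have hdefect : t ^ 2 • T + s • (T * T) - (t + s) ^ 2 • (T * T * (T + s • 1)⁻¹ʳ) =
      s • (A * (T * (T + s • 1)⁻¹ʳ) * A) := by
    rw [← hU.mul_left_inj]
    calc (t ^ 2 • T + s • (T * T) - (t + s) ^ 2 • (T * T * (T + s • 1)⁻¹ʳ)) * (T + s • 1)
        = (t ^ 2 • T + s • (T * T)) * (T + s • 1) - (t + s) ^ 2 • (T * T) := by
          rw [sub_mul, smul_mul_assoc, mul_assoc, Ring.inverse_mul_cancel _ hU, mul_one]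
      _ = s • (A * T * A) := by
          simp only [A, mul_add, add_mul, sub_mul, mul_sub, smul_mul_assoc, mul_smul_comm,
            mul_one, one_mul, smul_add, smul_sub, smul_smul, mul_assoc]
          module
      _ = s • (A * (T * (T + s • 1)⁻¹ʳ) * A) * (T + s • 1) := by
          rw [smul_mul_assoc]
          congr 1
          simp only [mul_assoc, hAU]
          rw [← mul_assoc _ (T + s • 1), Ring.inverse_mul_cancel _ hU, one_mul]
  rw [le_def, hdefect]
  refine IsPositive.smul_of_nonneg ?_ hs.le
  have h := (hT.isPositive_mul_inverse_add_smul_one hs).conj_adjoint A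
  rw [hA] at h
  rwa [mul_assoc]

end ContinuousLinearMap.IsPositive

section FractionalPower

variable {H : Type*} [NormedAddCommGroup H] [InnerProductSpace ℝ H] {T : H →L[ℝ] H} {α t : ℝ}

lemma inner_rpow_smul_mul_inverse_apply (hT : T.IsPositive) (s : ℝ) (x y : H) :
    ⟪(s ^ (α - 1) • (T * (T + s • 1)⁻¹ʳ)) x, T y⟫ =
      s ^ (α - 1) * ⟪(T * T * (T + s • 1)⁻¹ʳ) x, y⟫ := by
  rw [smul_apply, real_inner_smul_left, ← hT.inner_left_eq_inner_right]
  simp only [mul_apply_eq_comp]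

variable [CompleteSpace H]

lemma inner_integral_apply {X : Type*} [MeasurableSpace X] {μ : Measure X} {F : X → H →L[ℝ] H}
    (hF : Integrable F μ) (x y : H) : ⟪(∫ a, F a ∂μ) x, y⟫ = ∫ a, ⟪F a x, y⟫ ∂μ := by
  rw [ContinuousLinearMap.integral_apply hF, real_inner_comm,
    ← integral_inner (hF.apply_continuousLinearMap x)]
  simp_rw [real_inner_comm y]

lemma integrableOn_rpow_smul_mul_inverse_add_smul_one (hT : T.IsPositive) (hα : α ∈ Ioo 0 1) :
    IntegrableOn (fun s : ℝ => s ^ (α - 1) • (T * (T + s • 1)⁻¹ʳ)) (Ioi 0) := by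
  have hdom := (integrableOn_Ioi_rpow_div_add_rpow one_pos hα.1 (sub_pos.2 hα.2)).const_mul
    (2 + ‖T‖)
  refine hdom.mono' ?_ ?_
  · exact ((continuousOn_id.rpow_const fun s hs => Or.inl (ne_of_gt hs)).smul
      (continuousOn_const.mul hT.continuousOn_inverse_add_smul_one)).aestronglyMeasurable
      measurableSet_Ioi
  · filter_upwards [ae_restrict_mem measurableSet_Ioi] with s (hs : 0 < s)
    have hbound := hT.one_add_mul_norm_mul_inverse_le hs
    have hpow := rpow_pos_of_pos hs (α - 1)
    rw [norm_smul, norm_of_nonneg hpow.le, add_sub_cancel, rpow_one, mul_div_assoc',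
      le_div_iff₀ (by linarith)]
    nlinarith

lemma integrableOn_rpow_mul_inner_mul_self_mul_inverse (hT : T.IsPositive) (hα : α ∈ Ioo 0 1)
    (x y : H) :
    IntegrableOn (fun s : ℝ => s ^ (α - 1) * ⟪(T * T * (T + s • 1)⁻¹ʳ) x, y⟫) (Ioi 0) := by
  have h : IntegrableOn (fun s : ℝ => ⟪(s ^ (α - 1) • (T * (T + s • 1)⁻¹ʳ)) x, T y⟫) (Ioi 0) :=
    ((integrableOn_rpow_smul_mul_inverse_add_smul_one hT hα).apply_continuousLinearMap
      x).inner_const (T y)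
  exact h.congr_fun (fun s _ => inner_rpow_smul_mul_inverse_apply hT s x y) measurableSet_Ioi

lemma inner_mul_fracPow_apply (hT : T.IsPositive) (hα : α ∈ Ioo 0 1) (x y : H) :
    ⟪(T * fracPow T α) x, y⟫ =
      sin (α * π) / π * ∫ s in Ioi 0, s ^ (α - 1) * ⟪(T * T * (T + s • 1)⁻¹ʳ) x, y⟫ := by
  rw [mul_apply_eq_comp, hT.inner_left_eq_inner_right, fracPow, smul_apply,
    real_inner_smul_left,
    inner_integral_apply (integrableOn_rpow_smul_mul_inverse_add_smul_one hT hα)]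
  exact congrArg _ (setIntegral_congr_fun measurableSet_Ioi
    fun s _ => inner_rpow_smul_mul_inverse_apply hT s x y)

lemma isSelfAdjoint_mul_fracPow (hT : T.IsPositive) (hα : α ∈ Ioo 0 1) :
    IsSelfAdjoint (T * fracPow T α) := by
  rw [ContinuousLinearMap.isSelfAdjoint_iff_isSymmetric]
  intro x y
  rw [ContinuousLinearMap.coe_coe, inner_mul_fracPow_apply hT hα, real_inner_comm _ x,
    inner_mul_fracPow_apply hT hα]
  refine congrArg _ (setIntegral_congr_fun measurableSet_Ioi fun s (hs : 0 < s) => ?_)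
  have hTR := hT.commute_inverse_add_smul_one hs
  have hTT : IsSelfAdjoint (T * T) :=
    (hT.isSelfAdjoint.commute_iff hT.isSelfAdjoint).1 (Commute.refl T)
  have hTTR : IsSelfAdjoint (T * T * (T + s • 1)⁻¹ʳ) :=
    (hTT.commute_iff (hT.isSelfAdjoint_inverse_add_smul_one s)).1 (hTR.mul_left hTR)
  rw [real_inner_comm x]
  exact congrArg _ (hTTR.isSymmetric x y)

lemma rpow_mul_inner_mul_self_mul_inverse_le (hT : T.IsPositive) {s : ℝ} (hs : 0 < s) (ht : 0 ≤ t)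
    (x : H) :
    s ^ (α - 1) * ⟪(T * T * (T + s • 1)⁻¹ʳ) x, x⟫ ≤
      t ^ 2 * ⟪T x, x⟫ * (s ^ (α - 1) / (t + s) ^ 2) + ⟪(T * T) x, x⟫ * (s ^ α / (t + s) ^ 2) := by
  have h := ((ContinuousLinearMap.le_def _ _).1
    (hT.add_sq_smul_mul_self_mul_inverse_le hs t)).inner_nonneg_left x
  simp only [sub_apply, add_apply, smul_apply, inner_sub_left, inner_add_left,
    real_inner_smul_left] at h
  have hpow : s ^ α = s ^ (α - 1) * s := by rw [← rpow_add_one hs.ne', sub_add_cancel]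
  rw [hpow, show ∀ a b : ℝ, t ^ 2 * a * (s ^ (α - 1) / (t + s) ^ 2) +
      b * (s ^ (α - 1) * s / (t + s) ^ 2) = s ^ (α - 1) * ((t ^ 2 * a + s * b) / (t + s) ^ 2) by
    intros; ring]
  refine mul_le_mul_of_nonneg_left ?_ (rpow_pos_of_pos hs _).le
  rw [le_div_iff₀ (by positivity)]
  linarith

lemma rpow_mul_inner_mul_fracPow_le (hT : T.IsPositive) (hα : α ∈ Ioo 0 1) (ht : 0 < t) (x : H) :
    t ^ (1 - α) * ⟪(T * fracPow T α) x, x⟫ ≤ (1 - α) * t * ⟪T x, x⟫ + α * ⟪(T * T) x, x⟫ := by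
  obtain ⟨hα0, hα1⟩ := hα
  set a := ⟪T x, x⟫
  set b := ⟪(T * T) x, x⟫
  set c := sin (α * π) / π
  have hJ₁ := (integrableOn_Ioi_rpow_div_add_sq ht (β := α - 1) (by linarith)
    (by linarith)).const_mul (t ^ 2 * a)
  have hJ₂ := (integrableOn_Ioi_rpow_div_add_sq ht (β := α) (by linarith) hα1).const_mul b
  have hmono := setIntegral_mono_on
    (integrableOn_rpow_mul_inner_mul_self_mul_inverse hT ⟨hα0, hα1⟩ x x) (hJ₁.add hJ₂)
    measurableSet_Ioi
    fun s (hs : 0 < s) => rpow_mul_inner_mul_self_mul_inverse_le hT hs ht.le x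
  simp only [Pi.add_apply] at hmono
  rw [integral_add hJ₁ hJ₂, integral_const_mul, integral_const_mul,
    integral_Ioi_rpow_div_add_sq ht (by linarith) (by linarith),
    integral_Ioi_rpow_div_add_sq ht (by linarith) hα1, sub_add_cancel,
    show 1 - (α - 1) = 1 - α + 1 by ring, Gamma_add_one (by linarith), Gamma_add_one hα0.ne',
    show α - 1 - 1 = α - 2 by ring] at hmono
  have hsin : 0 < sin (α * π) := sin_pos_of_pos_of_lt_pi (by positivity) (by nlinarith [pi_pos])
  have hΓ : c * (Gamma α * Gamma (1 - α)) = 1 :=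
    sin_mul_pi_div_pi_mul_Gamma_mul_Gamma_one_sub hsin.ne'
  have hP : t ^ (1 - α) * t ^ (α - 1) = 1 := by
    rw [← rpow_add ht, show 1 - α + (α - 1) = 0 by ring, rpow_zero]
  have hX : t ^ (1 - α) * (t ^ 2 * t ^ (α - 2)) = t := by
    rw [← rpow_natCast, ← rpow_add ht, ← rpow_add ht]
    norm_num
  rw [inner_mul_fracPow_apply hT ⟨hα0, hα1⟩]
  calc t ^ (1 - α) * (c * ∫ s in Ioi 0, s ^ (α - 1) * ⟪(T * T * (T + s • 1)⁻¹ʳ) x, x⟫)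
      ≤ t ^ (1 - α) * (c * (t ^ 2 * a * (t ^ (α - 2) * (Gamma α * ((1 - α) * Gamma (1 - α)))) +
          b * (t ^ (α - 1) * (α * Gamma α * Gamma (1 - α))))) := by
        gcongr
    _ = (1 - α) * t * a + α * b := by
        linear_combination a * (1 - α) * (c * (Gamma α * Gamma (1 - α)) * hX + t * hΓ) +
          b * α * (c * (Gamma α * Gamma (1 - α)) * hP + hΓ)

lemma smul_mul_fracPow_le (hT : T.IsPositive) (hα : α ∈ Ioo 0 1) (ht : 0 < t) :
    t ^ (1 - α) • (T * fracPow T α) ≤ ((1 - α) * t) • T + α • (T * T) := by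
  rw [ContinuousLinearMap.le_def, ContinuousLinearMap.isPositive_iff']
  refine ⟨?_, fun x => ?_⟩
  · have hTT : IsSelfAdjoint (T * T) :=
      (hT.isSelfAdjoint.commute_iff hT.isSelfAdjoint).1 (Commute.refl T)
    exact (((IsSelfAdjoint.all _).smul hT.isSelfAdjoint).add ((IsSelfAdjoint.all _).smul hTT)).sub
      ((IsSelfAdjoint.all _).smul (isSelfAdjoint_mul_fracPow hT hα))
  · have h := rpow_mul_inner_mul_fracPow_le hT hα ht x
    simp only [sub_apply, add_apply, smul_apply, inner_sub_left, inner_add_left,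
      real_inner_smul_left]
    linarith

end FractionalPower

section OpRpow

variable {H : Type*} [NormedAddCommGroup H] [InnerProductSpace ℝ H]

lemma opRpow_natCast (T : H →L[ℝ] H) (n : ℕ) : opRpow T n = T ^ n := by
  simp [opRpow, nnPow]

lemma opRpow_natCast_add (T : H →L[ℝ] H) (n : ℕ) {α : ℝ} (hα : α ∈ Ioo 0 1) :
    opRpow T (n + α) = T ^ n * fracPow T α := by
  have hfloor : ⌊(n : ℝ) + α⌋₊ = n := by
    rw [Nat.floor_eq_iff (by linarith [hα.1])]
    constructor <;> linarith [hα.1, hα.2]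
  rw [opRpow, if_pos (by linarith [hα.1]), nnPow, hfloor, add_sub_cancel_left, if_neg hα.1.ne']

end OpRpow

theorem operator_young_inequality_general
    {H : Type*} [NormedAddCommGroup H] [InnerProductSpace ℝ H] [CompleteSpace H]
    (T : H →L[ℝ] H) (hT : T.IsPositive)
    (lam r : ℝ) (hlam : 0 < lam) (hr : r ∈ Set.Icc (1/2 : ℝ) 1) :
    ((((2 - 2*r) * lam) • T + (2*r - 1) • (T * T)) -
        lam ^ (2 - 2*r) • opRpow T (2*r)).IsPositive := by
  obtain ⟨hr₁, hr₂⟩ := hr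
  obtain rfl | hr₁ := hr₁.eq_or_lt
  · have h := opRpow_natCast T 1
    norm_num at h ⊢
    rw [h, sub_self]
    exact ContinuousLinearMap.isPositive_zero
  obtain rfl | hr₂ := hr₂.eq_or_lt
  · have h := opRpow_natCast T 2
    norm_num [sq] at h ⊢
    rw [h, sub_self]
    exact ContinuousLinearMap.isPositive_zero
  have hα : 2 * r - 1 ∈ Ioo 0 1 := ⟨by linarith, by linarith⟩
  have h := opRpow_natCast_add T 1 hα
  rw [Nat.cast_one, add_sub_cancel, pow_one] at h
  rw [h, show 2 - 2 * r = 1 - (2 * r - 1) by ring]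
  exact smul_mul_fracPow_le hT hα hlam

/-- Operator Young inequality (key step of Lemma A.2.6, case `r ∈ [1/2,1]`):
`λ^{2-2r} T^{2r} ≤ (2-2r) λ T + (2r-1) T²` in the Loewner order. -/
theorem operator_young_inequality
    {H : Type*} [NormedAddCommGroup H] [InnerProductSpace ℝ H] [CompleteSpace H]
    [TopologicalSpace.SeparableSpace H]
    (T : H →L[ℝ] H) (hT : T.IsPositive)
    (lam r : ℝ) (hlam : 0 < lam) (hr : r ∈ Set.Icc (1/2 : ℝ) 1) :
    ((((2 - 2*r) * lam) • T + (2*r - 1) • (T * T)) -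
        lam ^ (2 - 2*r) • opRpow T (2*r)).IsPositive :=
  operator_young_inequality_general T hT lam r hlam hr
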